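/- Fix ε ∈ (0,1). There exist C > 0 and x₀ (depending only on ε) such that for every real x ≥ x₀, every positive integer k, every integer t with 1 ≤ t ≤ log x, and all distinct integers n_1,…,n_t in [−x², x²], one has |P(n_1,…,n_t ∈ S(ā)) − σ^t| ≤ C·σ^t/(log x)^{16}. -/

import Mathlib

open scoped Classical

/-- `z(x) = exp(((1-ε)/2)·log x·log₃x/log₂x)`. -/
noncomputable def zParam (ε x : ℝ) : ℝ :=
  Real.exp ((1 - ε) / 2 * Real.log x * Real.log (Real.log (Real.log x)) /
    Real.log (Real.log x))

/-- The set of sieving primes `S = {s prime : (log x)^20 < s ≤ z, s ∤ k}`. -/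
noncomputable def sievePrimes (ε x : ℝ) (k : ℕ) : Finset ℕ :=
  (Finset.range (⌊zParam ε x⌋₊ + 1)).filter
    (fun s : ℕ => s.Prime ∧ (Real.log x) ^ (20 : ℕ) < (s : ℝ) ∧
      (s : ℝ) ≤ zParam ε x ∧ ¬ s ∣ k)

/-- `σ = ∏_{s ∈ S} (1 - 1/s)`. -/
noncomputable def sigmaParam (ε x : ℝ) (k : ℕ) : ℝ :=
  ∏ s ∈ sievePrimes ε x k, (1 - 1 / (s : ℝ))

/-- The probability, over `ā = (a_s)_{s ∈ S}` with each `a_s` independent and uniform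
among the residues mod `s`, that all of `n 0, …, n (t-1)` lie in
`S(ā) = {n : n ≢ a_s (mod s) for all s ∈ S}`. -/
noncomputable def probAllUnsieved (ε x : ℝ) (k : ℕ) {t : ℕ} (n : Fin t → ℤ) : ℝ :=
  ((((sievePrimes ε x k).pi (fun s => Finset.range s)).filter
      (fun a => ∀ i : Fin t, ∀ s : ℕ, ∀ hs : s ∈ sievePrimes ε x k,
        n i % (s : ℤ) ≠ (a s hs : ℤ))).card : ℝ) /
    ((((sievePrimes ε x k).pi (fun s => Finset.range s))).card : ℝ)

/-!
Since `ā` is uniform on a product of complete residue systems, the probability factors as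
`∏_{s ∈ S} (1 - r_s / s)`, where `r_s ≤ t` is the number of classes mod `s` met by the `n_i`, while
`σ^t = ∏_{s ∈ S} (1 - 1/s)^t`. As `s > (log x)^20 ≥ 2t`, the two factors at `s` differ by a relative
error `O(t/s)`, and only `O((t/s)^2)` when `r_s = t`. A prime with `r_s < t` divides one of the
nonzero differences `n_i - n_j`, which have size at most `2x²`, so there are `O(t² log x)` such
primes. The relative errors therefore sum to `O((log x)^{-16})`.
-/

open Finset Real

theorem Finset.one_sub_sum_le_prod_one_sub {ι : Type*} (s : Finset ι) {e : ι → ℝ}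
    (h0 : ∀ i ∈ s, 0 ≤ e i) (h1 : ∀ i ∈ s, e i ≤ 1) :
    1 - ∑ i ∈ s, e i ≤ ∏ i ∈ s, (1 - e i) := by
  induction s using Finset.induction_on with
  | empty => simp
  | insert a s ha ih =>
    rw [sum_insert ha, prod_insert ha]
    have ih' := ih (fun i hi => h0 i (mem_insert_of_mem hi))
      (fun i hi => h1 i (mem_insert_of_mem hi))
    have hsum := sum_nonneg fun i hi => h0 i (mem_insert_of_mem hi)
    have ha0 := h0 a (mem_insert_self a s)
    have ha1 := h1 a (mem_insert_self a s)
    nlinarith [mul_le_mul_of_nonneg_left ih' (sub_nonneg.2 ha1)]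

theorem Finset.abs_prod_sub_prod_le {ι : Type*} (s : Finset ι) {a b e : ι → ℝ}
    (hb : ∀ i ∈ s, 0 ≤ b i) (he : ∀ i ∈ s, 0 ≤ e i)
    (hab : ∀ i ∈ s, |a i - b i| ≤ e i * b i) (hE : ∑ i ∈ s, e i ≤ 1 / 2) :
    |∏ i ∈ s, a i - ∏ i ∈ s, b i| ≤ 2 * (∑ i ∈ s, e i) * ∏ i ∈ s, b i := by
  set E := ∑ i ∈ s, e i
  have hE0 : 0 ≤ E := sum_nonneg he
  have he1 : ∀ i ∈ s, e i ≤ 1 := fun i hi => (single_le_sum he hi).trans (by linarith)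
  have hB : 0 ≤ ∏ i ∈ s, b i := prod_nonneg hb
  have ha_low : ∀ i ∈ s, (1 - e i) * b i ≤ a i := fun i hi => by
    linarith [(abs_le.1 (hab i hi)).1]
  have ha_up : ∀ i ∈ s, a i ≤ (1 + e i) * b i := fun i hi => by
    linarith [(abs_le.1 (hab i hi)).2]
  have hlow : (1 - E) * ∏ i ∈ s, b i ≤ ∏ i ∈ s, a i := calc
    (1 - E) * ∏ i ∈ s, b i ≤ (∏ i ∈ s, (1 - e i)) * ∏ i ∈ s, b i :=
      mul_le_mul_of_nonneg_right (one_sub_sum_le_prod_one_sub s he he1) hB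
    _ = ∏ i ∈ s, (1 - e i) * b i := prod_mul_distrib.symm
    _ ≤ ∏ i ∈ s, a i :=
      prod_le_prod (fun i hi => mul_nonneg (sub_nonneg.2 (he1 i hi)) (hb i hi)) ha_low
  have hexp : exp E ≤ 1 + 2 * E := by
    refine (exp_bound_div_one_sub_of_interval hE0 (by linarith)).trans ?_
    rw [div_le_iff₀ (by linarith)]
    nlinarith
  have hup : ∏ i ∈ s, a i ≤ (1 + 2 * E) * ∏ i ∈ s, b i := calc
    ∏ i ∈ s, a i ≤ ∏ i ∈ s, (1 + e i) * b i :=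
      prod_le_prod (fun i hi => (mul_nonneg (sub_nonneg.2 (he1 i hi)) (hb i hi)).trans
        (ha_low i hi)) ha_up
    _ = (∏ i ∈ s, (1 + e i)) * ∏ i ∈ s, b i := prod_mul_distrib
    _ ≤ exp E * ∏ i ∈ s, b i := by
      refine mul_le_mul_of_nonneg_right ?_ hB
      rw [exp_sum]
      exact prod_le_prod (fun i hi => by linarith [he i hi])
        fun i _ => by linarith [add_one_le_exp (e i)]
    _ ≤ (1 + 2 * E) * ∏ i ∈ s, b i := mul_le_mul_of_nonneg_right hexp hB
  rw [abs_le]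
  constructor <;> nlinarith

section FactorComparison

variable {y : ℝ}

theorem one_sub_pow_le_one_sub_mul_add_sq (hy0 : 0 ≤ y) (hy1 : y ≤ 1) (m : ℕ) :
    (1 - y) ^ m ≤ 1 - m * y + (m * y) ^ 2 := by
  induction m with
  | zero => simp
  | succ m ih =>
    rw [pow_succ]
    push_cast
    nlinarith [mul_le_mul_of_nonneg_right ih (sub_nonneg.2 hy1),
      mul_nonneg (mul_nonneg (sq_nonneg (m : ℝ)) hy0) (sq_nonneg y)]

theorem one_sub_pow_mem_Icc (hy0 : 0 ≤ y) (hy1 : y ≤ 1) (t : ℕ) :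
    (1 - y) ^ t ∈ Set.Icc (1 - t * y) (1 - t * y + (t * y) ^ 2) := by
  refine ⟨?_, one_sub_pow_le_one_sub_mul_add_sq hy0 hy1 t⟩
  simpa [sub_eq_add_neg] using one_add_mul_le_pow (a := -y) (by linarith) t

theorem abs_one_sub_mul_sub_one_sub_pow_le {t r : ℕ} (hy0 : 0 ≤ y) (hy1 : y ≤ 1)
    (hty : t * y ≤ 1 / 2) (hrt : r ≤ t) :
    |(1 - r * y) - (1 - y) ^ t| ≤ 2 * (t * y) * (1 - y) ^ t := by
  obtain ⟨hlow, hup⟩ := one_sub_pow_mem_Icc hy0 hy1 t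
  have hr : (r : ℝ) * y ≤ t * y := by gcongr
  have hry : 0 ≤ (r : ℝ) * y := by positivity
  rw [abs_le]
  constructor <;> nlinarith

theorem abs_one_sub_mul_sub_one_sub_pow_le_sq {t : ℕ} (hy0 : 0 ≤ y) (hy1 : y ≤ 1)
    (hty : t * y ≤ 1 / 2) :
    |(1 - t * y) - (1 - y) ^ t| ≤ 2 * (t * y) ^ 2 * (1 - y) ^ t := by
  obtain ⟨hlow, hup⟩ := one_sub_pow_mem_Icc hy0 hy1 t
  rw [abs_le]
  constructor <;> nlinarith [sq_nonneg ((t : ℝ) * y)]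

end FactorComparison

section Residues

variable {t : ℕ} (n : Fin t → ℤ)

noncomputable def residueCount (s : ℕ) : ℕ :=
  #(univ.image fun i => (n i % (s : ℤ)).toNat)

theorem residueCount_le (s : ℕ) : residueCount n s ≤ t := by
  simpa [residueCount] using card_image_le (s := (univ : Finset (Fin t)))

theorem image_emod_toNat_subset_range {s : ℕ} (hs : 0 < s) :
    univ.image (fun i => (n i % (s : ℤ)).toNat) ⊆ range s := by
  intro b hb
  obtain ⟨i, -, rfl⟩ := mem_image.1 hb
  have := Int.emod_lt_of_pos (n i) (by exact_mod_cast hs : (0 : ℤ) < s)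
  rw [mem_range]
  omega

theorem residueCount_le_modulus {s : ℕ} (hs : 0 < s) : residueCount n s ≤ s :=
  (card_le_card (image_emod_toNat_subset_range n hs)).trans_eq (card_range s)

theorem card_filter_forall_emod_ne {s : ℕ} (hs : 0 < s) :
    #((range s).filter fun b : ℕ => ∀ i, n i % (s : ℤ) ≠ b) = s - residueCount n s := by
  have hnonneg : ∀ i, 0 ≤ n i % (s : ℤ) := fun i => Int.emod_nonneg _ (by exact_mod_cast hs.ne')
  have hfilter : (range s).filter (fun b : ℕ => ∀ i, n i % (s : ℤ) ≠ b) =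
      range s \ univ.image fun i => (n i % (s : ℤ)).toNat := by
    ext b
    simp only [mem_filter, mem_sdiff, mem_image, mem_univ, true_and, not_exists]
    refine and_congr_right fun _ => forall_congr' fun i => ?_
    have := hnonneg i
    omega
  rw [hfilter, card_sdiff_of_subset (image_emod_toNat_subset_range n hs), card_range,
    residueCount]

theorem probAllUnsieved_eq_prod (ε x : ℝ) (k : ℕ) :
    probAllUnsieved ε x k n =
      ∏ s ∈ sievePrimes ε x k, (1 - (residueCount n s : ℝ) * (s : ℝ)⁻¹) := by
  set S := sievePrimes ε x k
  have hpos : ∀ s ∈ S, 0 < s := fun s hs => (mem_filter.1 hs).2.1.pos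
  have hpi : (S.pi fun s => range s).filter
        (fun a => ∀ i : Fin t, ∀ s : ℕ, ∀ hs : s ∈ S, n i % (s : ℤ) ≠ (a s hs : ℤ)) =
      S.pi fun s => (range s).filter fun b : ℕ => ∀ i, n i % (s : ℤ) ≠ b := by
    ext a
    simp only [mem_filter, mem_pi]
    exact ⟨fun h s hs => ⟨h.1 s hs, fun i => h.2 i s hs⟩,
      fun h => ⟨fun s hs => (h s hs).1, fun i s hs => (h s hs).2 i⟩⟩
  rw [probAllUnsieved, filter_congr_decidable, hpi, card_pi, card_pi, Nat.cast_prod,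
    Nat.cast_prod, ← prod_div_distrib]
  refine prod_congr rfl fun s hs => ?_
  have hs0 := hpos s hs
  rw [filter_congr_decidable, card_filter_forall_emod_ne n hs0, card_range,
    Nat.cast_sub (residueCount_le_modulus n hs0)]
  field_simp

theorem exists_ne_dvd_sub_of_residueCount_lt {s : ℕ} (hs : 0 < s)
    (h : residueCount n s < t) : ∃ i j, i ≠ j ∧ (s : ℤ) ∣ n i - n j := by
  have hnot : ¬ Set.InjOn (fun i => (n i % (s : ℤ)).toNat) (univ : Finset (Fin t)) := by
    intro hinj
    have := card_image_of_injOn hinj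
    rw [card_univ, Fintype.card_fin] at this
    rw [residueCount] at h
    omega
  simp only [Set.InjOn, coe_univ, Set.mem_univ, true_implies, not_forall] at hnot
  obtain ⟨i, j, heq, hne⟩ := hnot
  have hi := Int.emod_nonneg (n i) (by exact_mod_cast hs.ne' : (s : ℤ) ≠ 0)
  have hj := Int.emod_nonneg (n j) (by exact_mod_cast hs.ne' : (s : ℤ) ≠ 0)
  have hmod : n j % (s : ℤ) = n i % (s : ℤ) := by omega
  exact ⟨i, j, hne, Int.ModEq.dvd hmod⟩

theorem card_filter_residueCount_lt_le_sum {T : Finset ℕ} (hT : ∀ s ∈ T, 0 < s) :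
    #(T.filter fun s => residueCount n s < t) ≤
      ∑ p ∈ (univ : Finset (Fin t)).offDiag, #(T.filter fun s : ℕ => (s : ℤ) ∣ n p.1 - n p.2) := by
  refine (card_le_card fun s hs => ?_).trans card_biUnion_le
  obtain ⟨hsT, hlt⟩ := mem_filter.1 hs
  obtain ⟨i, j, hne, hdvd⟩ := exists_ne_dvd_sub_of_residueCount_lt n (hT s hsT) hlt
  exact mem_biUnion.2 ⟨(i, j), by simpa using hne, mem_filter.2 ⟨hsT, hdvd⟩⟩

end Residues

theorem two_pow_card_filter_dvd_le {T : Finset ℕ} (hT : ∀ s ∈ T, s.Prime) {d : ℤ}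
    (hd : d ≠ 0) : 2 ^ #(T.filter fun s : ℕ => (s : ℤ) ∣ d) ≤ d.natAbs := by
  set D := T.filter fun s : ℕ => (s : ℤ) ∣ d
  have hprime : ∀ s ∈ D, s.Prime := fun s hs => hT s (mem_filter.1 hs).1
  have hdvd : ∏ s ∈ D, s ∣ d.natAbs :=
    prod_primes_dvd _ (fun s hs => (hprime s hs).prime)
      fun s hs => Int.natCast_dvd.1 (mem_filter.1 hs).2
  calc 2 ^ #D = ∏ _s ∈ D, 2 := (prod_const 2).symm
    _ ≤ ∏ s ∈ D, s := prod_le_prod' fun s hs => (hprime s hs).two_le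
    _ ≤ d.natAbs := Nat.le_of_dvd (Int.natAbs_pos.2 hd) hdvd

theorem card_filter_dvd_le_four_mul_log {T : Finset ℕ} (hT : ∀ s ∈ T, s.Prime) {d : ℤ}
    (hd : d ≠ 0) {x : ℝ} (hdx : |(d : ℝ)| ≤ 2 * x ^ 2) (hx : 1 ≤ log x) :
    (#(T.filter fun s : ℕ => (s : ℤ) ∣ d) : ℝ) ≤ 4 * log x := by
  set m := #(T.filter fun s : ℕ => (s : ℤ) ∣ d)
  have hx0 : x ≠ 0 := by rintro rfl; norm_num at hx
  have hpow : (2 : ℝ) ^ m ≤ 2 * x ^ 2 := by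
    refine le_trans ?_ hdx
    rw [← Int.cast_abs, ← Int.natCast_natAbs]
    exact_mod_cast two_pow_card_filter_dvd_le hT hd
  have hlog : m * log 2 ≤ log 2 + 2 * log x := by
    have := log_le_log (by positivity) hpow
    rwa [log_pow, log_mul two_ne_zero (pow_ne_zero 2 hx0), log_pow, Nat.cast_ofNat] at this
  nlinarith [log_two_gt_d9, log_two_lt_d9, (Nat.cast_nonneg m : (0 : ℝ) ≤ m)]

theorem card_filter_residueCount_lt_le {t : ℕ} {n : Fin t → ℤ} (hn : Function.Injective n)
    {T : Finset ℕ} (hT : ∀ s ∈ T, s.Prime) {x : ℝ} (hnx : ∀ i, |(n i : ℝ)| ≤ x ^ 2)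
    (hx : 1 ≤ log x) :
    (#(T.filter fun s => residueCount n s < t) : ℝ) ≤ 4 * t ^ 2 * log x := by
  have hsum := card_filter_residueCount_lt_le_sum n fun s hs => (hT s hs).pos
  have hterm : ∀ p ∈ (univ : Finset (Fin t)).offDiag,
      (#(T.filter fun s : ℕ => (s : ℤ) ∣ n p.1 - n p.2) : ℝ) ≤ 4 * log x := by
    intro p hp
    have hne : n p.1 - n p.2 ≠ 0 := sub_ne_zero.2 (hn.ne (mem_offDiag.1 hp).2.2)
    refine card_filter_dvd_le_four_mul_log hT hne ?_ hx
    push_cast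
    linarith [abs_sub (n p.1 : ℝ) (n p.2), hnx p.1, hnx p.2]
  have hoff : ((univ : Finset (Fin t)).offDiag.card : ℝ) ≤ t ^ 2 := by
    have : (univ : Finset (Fin t)).offDiag.card ≤ t ^ 2 := by
      rw [offDiag_card, card_univ, Fintype.card_fin]
      exact (Nat.sub_le _ _).trans_eq (sq t).symm
    exact_mod_cast this
  calc (#(T.filter fun s => residueCount n s < t) : ℝ)
      ≤ ∑ p ∈ (univ : Finset (Fin t)).offDiag,
          (#(T.filter fun s : ℕ => (s : ℤ) ∣ n p.1 - n p.2) : ℝ) := by exact_mod_cast hsum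
    _ ≤ (univ : Finset (Fin t)).offDiag.card * (4 * log x) := by
      simpa using sum_le_card_nsmul _ _ _ hterm
    _ ≤ 4 * t ^ 2 * log x := by nlinarith

theorem sum_inv_sq_le_of_forall_lt {S : Finset ℕ} {M : ℝ} (hM : 0 < M)
    (hS : ∀ s ∈ S, M < s) : ∑ s ∈ S, ((s : ℝ) ^ 2)⁻¹ ≤ 2 / M := by
  have hsub : S ⊆ Ioo ⌊M⌋₊ (S.sup id + 1) := fun s hs =>
    mem_Ioo.2 ⟨(Nat.floor_lt hM.le).2 (hS s hs), Nat.lt_succ_of_le (le_sup (f := id) hs)⟩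
  calc ∑ s ∈ S, ((s : ℝ) ^ 2)⁻¹ ≤ ∑ s ∈ Ioo ⌊M⌋₊ (S.sup id + 1), ((s : ℝ) ^ 2)⁻¹ :=
        sum_le_sum_of_subset_of_nonneg hsub fun _ _ _ => by positivity
    _ ≤ 2 / (⌊M⌋₊ + 1) := sum_Ioo_inv_sq_le _ _
    _ ≤ 2 / M := div_le_div_of_nonneg_left zero_le_two hM (Nat.lt_floor_add_one M).le

noncomputable def relError {t : ℕ} (n : Fin t → ℤ) (s : ℕ) : ℝ :=
  2 * if residueCount n s < t then t * (s : ℝ)⁻¹ else (t * (s : ℝ)⁻¹) ^ 2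

theorem abs_sub_le_relError_mul {t : ℕ} (n : Fin t → ℤ) {s : ℕ} (hs : 0 < s)
    (hts : 2 * (t : ℝ) ≤ s) :
    |(1 - residueCount n s * (s : ℝ)⁻¹) - (1 - (s : ℝ)⁻¹) ^ t| ≤
      relError n s * (1 - (s : ℝ)⁻¹) ^ t := by
  have hs' : (0 : ℝ) < s := by exact_mod_cast hs
  have hy0 : 0 ≤ (s : ℝ)⁻¹ := inv_nonneg.2 hs'.le
  have hy1 : (s : ℝ)⁻¹ ≤ 1 := inv_le_one_of_one_le₀ (by exact_mod_cast hs)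
  have hty : t * (s : ℝ)⁻¹ ≤ 1 / 2 := by
    rw [← div_eq_mul_inv, div_le_iff₀ hs']
    linarith
  rw [relError]
  split_ifs with hlt
  · exact abs_one_sub_mul_sub_one_sub_pow_le hy0 hy1 hty (residueCount_le n s)
  · rw [le_antisymm (residueCount_le n s) (not_lt.1 hlt)]
    exact abs_one_sub_mul_sub_one_sub_pow_le_sq hy0 hy1 hty

theorem sum_relError_le {t : ℕ} {n : Fin t → ℤ} (hn : Function.Injective n) {x : ℝ}
    (hnx : ∀ i, |(n i : ℝ)| ≤ x ^ 2) (hx : 2 ≤ log x) (htx : t ≤ log x) {T : Finset ℕ}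
    (hT : ∀ s ∈ T, s.Prime ∧ log x ^ 20 < s) :
    ∑ s ∈ T, relError n s ≤ 9 / log x ^ 16 := by
  set L := log x
  have hbad := card_filter_residueCount_lt_le hn (fun s hs => (hT s hs).1) hnx (by linarith)
  have hL20 : 0 < L ^ 20 := by positivity
  have hinv : ∀ s ∈ T, (s : ℝ)⁻¹ ≤ (L ^ 20)⁻¹ := fun s hs => inv_anti₀ hL20 (hT s hs).2.le
  have hlinear : ∑ s ∈ T.filter (residueCount n · < t), t * (s : ℝ)⁻¹ ≤ 4 / L ^ 16 := calc
    ∑ s ∈ T.filter (residueCount n · < t), t * (s : ℝ)⁻¹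
        ≤ #(T.filter (residueCount n · < t)) * (t * (L ^ 20)⁻¹) := by
      simpa using sum_le_card_nsmul _ _ _ fun s hs =>
        mul_le_mul_of_nonneg_left (hinv s (mem_filter.1 hs).1) (Nat.cast_nonneg t)
    _ ≤ 4 * L ^ 2 * L * (L * (L ^ 20)⁻¹) := by
      gcongr
      exact hbad.trans (by gcongr)
    _ = 4 / L ^ 16 := by field_simp
  have hquadratic : ∑ s ∈ T, (t : ℝ) ^ 2 * ((s : ℝ) ^ 2)⁻¹ ≤ 1 / (2 * L ^ 16) := calc
    ∑ s ∈ T, (t : ℝ) ^ 2 * ((s : ℝ) ^ 2)⁻¹ ≤ L ^ 2 * (2 / L ^ 20) := by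
      rw [← mul_sum]
      gcongr
      exact sum_inv_sq_le_of_forall_lt hL20 fun s hs => (hT s hs).2
    _ = 1 / (2 * L ^ 16) * (4 / L ^ 2) := by field_simp; ring
    _ ≤ 1 / (2 * L ^ 16) := by
      refine mul_le_of_le_one_right (by positivity) ?_
      rw [div_le_one (by positivity)]
      nlinarith
  calc ∑ s ∈ T, relError n s
      ≤ ∑ s ∈ T, (2 * (if residueCount n s < t then t * (s : ℝ)⁻¹ else 0) +
          2 * ((t : ℝ) ^ 2 * ((s : ℝ) ^ 2)⁻¹)) := by
        refine sum_le_sum fun s _ => ?_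
        rw [relError]
        split_ifs
        · have : 0 ≤ (t : ℝ) ^ 2 * ((s : ℝ) ^ 2)⁻¹ := by positivity
          linarith
        · rw [mul_pow, inv_pow]
          linarith
    _ = 2 * ∑ s ∈ T.filter (residueCount n · < t), t * (s : ℝ)⁻¹ +
          2 * ∑ s ∈ T, (t : ℝ) ^ 2 * ((s : ℝ) ^ 2)⁻¹ := by
        rw [sum_add_distrib, ← mul_sum, ← mul_sum, sum_filter]
    _ ≤ 9 / L ^ 16 := by
        have : 2 * (4 / L ^ 16) + 2 * (1 / (2 * L ^ 16)) = 9 / L ^ 16 := by field_simp; ring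
        linarith

theorem sieve_quasi_independence_general (ε : ℝ) :
    ∃ C : ℝ, 0 < C ∧ ∃ x₀ : ℝ, ∀ x : ℝ, x₀ ≤ x → ∀ k : ℕ, 0 < k →
      ∀ t : ℕ, 1 ≤ t → (t : ℝ) ≤ Real.log x →
      ∀ n : Fin t → ℤ, Function.Injective n → (∀ i, |(n i : ℝ)| ≤ x ^ (2 : ℕ)) →
      |probAllUnsieved ε x k n - (sigmaParam ε x k) ^ t| ≤
        C * (sigmaParam ε x k) ^ t / (Real.log x) ^ (16 : ℕ) := by
  refine ⟨18, by norm_num, exp 2, fun x hx k _ t _ htx n hn hnx => ?_⟩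
  have hx2 : 2 ≤ log x := by simpa using log_le_log (exp_pos 2) hx
  set S := sievePrimes ε x k
  have hS : ∀ s ∈ S, s.Prime ∧ log x ^ 20 < s := fun s hs =>
    ⟨(mem_filter.1 hs).2.1, (mem_filter.1 hs).2.2.1⟩
  have hts : ∀ s ∈ S, 2 * (t : ℝ) ≤ s := fun s hs => by
    have : 2 ≤ log x ^ 19 := hx2.trans (le_self_pow₀ (by linarith) (by norm_num))
    nlinarith [(hS s hs).2]
  have hE := sum_relError_le hn hnx hx2 htx hS
  have hE_half : 9 / log x ^ 16 ≤ 1 / 2 := by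
    rw [div_le_div_iff₀ (by positivity) two_pos]
    nlinarith [pow_le_pow_left₀ zero_le_two hx2 16]
  have hσ : ∀ s ∈ S, 0 ≤ (1 - (s : ℝ)⁻¹) ^ t := fun s hs =>
    pow_nonneg (sub_nonneg.2 (inv_le_one_of_one_le₀ (by exact_mod_cast (hS s hs).1.pos))) t
  rw [probAllUnsieved_eq_prod, sigmaParam, ← prod_pow]
  simp only [one_div]
  calc _ ≤ 2 * (∑ s ∈ S, relError n s) * ∏ s ∈ S, (1 - (s : ℝ)⁻¹) ^ t :=
        abs_prod_sub_prod_le S hσ (fun s _ => by rw [relError]; positivity)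
          (fun s hs => abs_sub_le_relError_mul n (hS s hs).1.pos (hts s hs)) (hE.trans hE_half)
    _ ≤ 2 * (9 / log x ^ 16) * ∏ s ∈ S, (1 - (s : ℝ)⁻¹) ^ t := by
        gcongr
        exact prod_nonneg hσ
    _ = 18 * (∏ s ∈ S, (1 - (s : ℝ)⁻¹) ^ t) / log x ^ 16 := by ring

/-- Fix `ε ∈ (0,1)`.  There are `C > 0` and `x₀` such that for all `x ≥ x₀`, every
positive integer `k`, every `1 ≤ t ≤ log x` and all distinct integers
`n_1, …, n_t ∈ [-x², x²]`, one has
`|P(n_1,…,n_t ∈ S(ā)) - σ^t| ≤ C·σ^t/(log x)^16`. -/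
theorem sieve_quasi_independence (ε : ℝ) (hε0 : 0 < ε) (hε1 : ε < 1) :
    ∃ C : ℝ, 0 < C ∧ ∃ x₀ : ℝ, ∀ x : ℝ, x₀ ≤ x → ∀ k : ℕ, 0 < k →
      ∀ t : ℕ, 1 ≤ t → (t : ℝ) ≤ Real.log x →
      ∀ n : Fin t → ℤ, Function.Injective n → (∀ i, |(n i : ℝ)| ≤ x ^ (2 : ℕ)) →
      |probAllUnsieved ε x k n - (sigmaParam ε x k) ^ t| ≤
        C * (sigmaParam ε x k) ^ t / (Real.log x) ^ (16 : ℕ) :=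
  sieve_quasi_independence_general ε
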